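/- Let k > s ≥ 3 be integers, let N be a positive integer, and let S ⊆ {1,…,N} be a k-AP free set. Then there exist d₁,…,d_s ∈ {1,…,2N} such that, with S_i = { x + 6(i−1)N − 1 + d_i : x ∈ S } and A = S₁ ∪ ⋯ ∪ S_s, the set A contains at least (1/s)·binom(N,2)·|S|^s·(2N)^{−s} nontrivial s-term arithmetic progressions. -/

import Mathlib

open Finset Pointwise

/-- The `k`-term arithmetic progression `{x, x+d, …, x+(k-1)d}` as a finite set. -/
def AP (k : ℕ) (x d : ℤ) : Finset ℤ := (Finset.range k).image (fun i : ℕ => x + (i : ℤ) * d)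

/-- A set of integers is `k`-AP free if it contains no nontrivial `k`-term
arithmetic progression. -/
def APFree (k : ℕ) (A : Set ℤ) : Prop :=
  ∀ x d : ℤ, d ≠ 0 → ¬ (↑(AP k x d) : Set ℤ) ⊆ A

/-- `fAP s A` is the number of nontrivial `s`-term arithmetic progressions contained
in the finite set `A`. -/
noncomputable def fAP (s : ℕ) (A : Finset ℤ) : ℕ :=
  Nat.card {P : Finset ℤ // P ⊆ A ∧ ∃ x d : ℤ, d ≠ 0 ∧ P = AP s x d}

/-- `fsk s k n` is the maximum number of nontrivial `s`-term arithmetic progressions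
in a `k`-AP free set of `n` integers. -/
noncomputable def fsk (s k n : ℕ) : ℕ :=
  sSup {m | ∃ A : Finset ℤ, A.card = n ∧ APFree k ↑A ∧ fAP s A = m}

/-- `rk k n` is the size of the largest `k`-AP free subset of `{1, …, n}`. -/
noncomputable def rk (k n : ℕ) : ℕ :=
  sSup {m | ∃ A : Finset ℤ, A ⊆ Finset.Icc 1 (n : ℤ) ∧ APFree k ↑A ∧ A.card = m}

/-- The partial sumset `A +_G B` along the edge set `E` of a bipartite graph. -/
def partialSumset (E : Finset (ℤ × ℤ)) : Finset ℤ := E.image (fun e => e.1 + e.2)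

/-- `pathCount A B E a a'` is the number of (ordered) paths `(a, b, a'', b', a')` of
length four between `a` and `a'` in the bipartite graph with parts `A`, `B` and
edge set `E`. -/
def pathCount (A B : Finset ℤ) (E : Finset (ℤ × ℤ)) (a a' : ℤ) : ℕ :=
  ((B ×ˢ A ×ˢ B).filter (fun t =>
    (a, t.1) ∈ E ∧ (t.2.1, t.1) ∈ E ∧ (t.2.1, t.2.2) ∈ E ∧ (a', t.2.2) ∈ E)).card

/-!
The `i`-th translate `S + 6iN - 1 + d_i` lies in the window `[6iN, 6iN + 3N]`. A progression
with first term `2N - j` and common difference `6N + m`, where `(s - 1) m ≤ j ≤ N`, has its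
`i`-th term in the `i`-th window, and for every choice of `x ∈ S^s` there is exactly one shift
vector `d ∈ [1, 2N]^s` placing `x_i` at that term. So each of these `≥ binom(N,2)/s`
progressions lies in `A_d` for at least `|S|^s` of the `(2N)^s` shift vectors, and averaging
over `d` gives the bound.
-/

section AP

variable {k : ℕ} {x d y : ℤ}

theorem mem_AP : y ∈ AP k x d ↔ ∃ i < k, x + (i : ℤ) * d = y := by
  simp [AP]

theorem isLeast_AP (hk : 0 < k) (hd : 0 ≤ d) : IsLeast (AP k x d : Set ℤ) x := by
  refine ⟨mem_AP.2 ⟨0, hk, by simp⟩, ?_⟩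
  rintro _ hy
  obtain ⟨i, -, rfl⟩ := mem_AP.1 hy
  nlinarith [Int.natCast_nonneg i]

theorem isGreatest_AP (hk : 0 < k) (hd : 0 ≤ d) :
    IsGreatest (AP k x d : Set ℤ) (x + ((k : ℤ) - 1) * d) := by
  refine ⟨mem_AP.2 ⟨k - 1, by omega, by rw [Nat.cast_pred hk]⟩, ?_⟩
  rintro _ hy
  obtain ⟨i, hi, rfl⟩ := mem_AP.1 hy
  have : (i : ℤ) ≤ (k : ℤ) - 1 := by omega
  nlinarith

theorem AP_inj_of_pos {x' d' : ℤ} (hk : 2 ≤ k) (hd : 0 < d) (hd' : 0 < d')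
    (h : AP k x d = AP k x' d') : x = x' ∧ d = d' := by
  have hx : x = x' := (isLeast_AP (by omega) hd.le).unique (h ▸ isLeast_AP (by omega) hd'.le)
  have hlast := (isGreatest_AP (by omega) hd.le).unique
    (h ▸ isGreatest_AP (x := x') (by omega) hd'.le)
  subst hx
  exact ⟨rfl, mul_left_cancel₀ (by omega : (k : ℤ) - 1 ≠ 0) (by linarith)⟩

end AP

open Classical in
theorem fAP_eq_card_filter (s : ℕ) (A : Finset ℤ) :
    fAP s A = #{P ∈ A.powerset | ∃ x d : ℤ, d ≠ 0 ∧ P = AP s x d} := by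
  rw [fAP, ← Nat.card_eq_finsetCard]
  exact Nat.card_congr (Equiv.subtypeEquivRight fun P => by simp)

theorem card_le_fAP {ι : Type*} {s : ℕ} {A : Finset ℤ} {G : Finset ι} {P : ι → Finset ℤ}
    (hinj : Set.InjOn P G) (hAP : ∀ g ∈ G, ∃ x d : ℤ, d ≠ 0 ∧ P g = AP s x d)
    (hsub : ∀ g ∈ G, P g ⊆ A) : #G ≤ fAP s A := by
  rw [fAP_eq_card_filter]
  refine card_le_card_of_injOn P (fun g hg => ?_) hinj
  simpa using ⟨hsub g hg, hAP g hg⟩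

noncomputable def shiftBox (s N : ℕ) : Finset (Fin s → ℤ) :=
  Fintype.piFinset fun _ => Icc (1 : ℤ) (2 * N)

theorem card_shiftBox (s N : ℕ) : #(shiftBox s N) = (2 * N) ^ s := by
  simp only [shiftBox, Fintype.card_piFinset, Int.card_Icc, prod_const, card_univ,
    Fintype.card_fin]
  congr 1
  omega

theorem shiftBox_nonempty {s N : ℕ} (hN : 0 < N) : (shiftBox s N).Nonempty :=
  Fintype.piFinset_nonempty.2 fun _ => ⟨1, mem_Icc.2 ⟨le_rfl, by omega⟩⟩

/-- The set `A = S₁ ∪ ⋯ ∪ S_s`, indexed from `0`. -/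
def shiftedCopies (S : Finset ℤ) (N : ℕ) {s : ℕ} (d : Fin s → ℤ) : Finset ℤ :=
  univ.biUnion fun i : Fin s => S.image fun x => x + 6 * ((i : ℕ) : ℤ) * N - 1 + d i

def blockAPIndex (s N : ℕ) : Finset (Σ _ : ℕ, ℕ) :=
  (range (N + 1)).sigma fun j => range (j / (s - 1) + 1)

def blockAP (s N : ℕ) (g : Σ _ : ℕ, ℕ) : Finset ℤ := AP s (2 * N - g.1) (6 * N + g.2)

section blockAP

variable {s N : ℕ} {g : Σ _ : ℕ, ℕ}

theorem choose_two_le_mul_card_blockAPIndex (hs : 2 ≤ s) :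
    N.choose 2 ≤ s * #(blockAPIndex s N) := by
  rw [blockAPIndex, card_sigma, mul_sum]
  calc N.choose 2 ≤ (N + 1).choose 2 := Nat.choose_le_choose 2 N.le_succ
    _ = ∑ j ∈ range (N + 1), j := by rw [sum_range_id, Nat.choose_two_right]
    _ ≤ ∑ j ∈ range (N + 1), s * #(range (j / (s - 1) + 1)) := by
      refine sum_le_sum fun j _ => ?_
      rw [card_range]
      calc j ≤ (s - 1) * (j / (s - 1) + 1) := (Nat.lt_mul_div_succ j (by omega)).le
        _ ≤ s * (j / (s - 1) + 1) := Nat.mul_le_mul_right _ (Nat.sub_le s 1)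

theorem blockAP_term_mem_Icc (hg : g ∈ blockAPIndex s N) {i : ℕ} (hi : i < s) :
    2 * (N : ℤ) - g.1 + i * g.2 ∈ Icc (N : ℤ) (2 * N) := by
  simp only [blockAPIndex, mem_sigma, mem_range] at hg
  have hm : g.2 * (s - 1) ≤ g.1 := Nat.mul_le_of_le_div _ _ _ (by omega)
  have him : i * g.2 ≤ g.1 :=
    (Nat.mul_le_mul_right _ (by omega : i ≤ s - 1)).trans (by rwa [Nat.mul_comm])
  have : (i : ℤ) * g.2 ≤ g.1 := by exact_mod_cast him
  rw [mem_Icc]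
  constructor <;> nlinarith [Int.natCast_nonneg (i * g.2)]

theorem blockAP_subset_shiftedCopies {S : Finset ℤ} {x : Fin s → ℤ} (hx : ∀ i, x i ∈ S) :
    blockAP s N g ⊆
      shiftedCopies S N fun i => 2 * (N : ℤ) - g.1 + (i : ℕ) * g.2 + 1 - x i := by
  intro y hy
  obtain ⟨i, hi, rfl⟩ := mem_AP.1 hy
  simp only [shiftedCopies, mem_biUnion, mem_univ, mem_image, true_and]
  exact ⟨⟨i, hi⟩, x ⟨i, hi⟩, hx _, by push_cast; ring⟩

theorem pow_card_le_card_shifts_containing_blockAP {S : Finset ℤ} (hS : S ⊆ Icc 1 (N : ℤ))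
    (hg : g ∈ blockAPIndex s N) :
    #S ^ s ≤ #{d ∈ shiftBox s N | blockAP s N g ⊆ shiftedCopies S N d} := by
  have hcard : #(Fintype.piFinset fun _ : Fin s => S) = #S ^ s := by simp
  rw [← hcard]
  refine card_le_card_of_injOn (fun x i => 2 * (N : ℤ) - g.1 + (i : ℕ) * g.2 + 1 - x i)
    (fun x hx => ?_) (fun x _ x' _ h => funext fun i => by simpa using congrFun h i)
  rw [mem_coe, Fintype.mem_piFinset] at hx
  refine mem_filter.2 ⟨Fintype.mem_piFinset.2 fun i => ?_, blockAP_subset_shiftedCopies hx⟩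
  have hterm := mem_Icc.1 (blockAP_term_mem_Icc hg i.isLt)
  have hxi := mem_Icc.1 (hS (hx i))
  exact mem_Icc.2 ⟨by linarith, by linarith⟩

theorem blockAP_injOn (hs : 2 ≤ s) (hN : 0 < N) : Set.InjOn (blockAP s N) (blockAPIndex s N) := by
  intro g _ g' _ h
  obtain ⟨hx, hd⟩ := AP_inj_of_pos hs (by positivity) (by positivity) h
  exact Sigma.ext (by omega) (heq_of_eq (by omega))

end blockAP

theorem exists_good_shifts_general (s : ℕ) (hs : 3 ≤ s) (N : ℕ) (hN : 0 < N)
    (S : Finset ℤ) (hS : S ⊆ Finset.Icc 1 (N : ℤ)) :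
    ∃ d : Fin s → ℤ, (∀ i, d i ∈ Finset.Icc (1 : ℤ) (2 * N)) ∧
      (1 / (s : ℝ)) * (N.choose 2 : ℝ) * (S.card : ℝ) ^ s * ((2 * N : ℝ)) ^ (-(s : ℤ)) ≤
        (fAP s (Finset.univ.biUnion (fun i : Fin s =>
          S.image (fun x => x + 6 * ((i : ℕ) : ℤ) * N - 1 + d i))) : ℝ) := by
  classical
  set bound : ℝ :=
    1 / (s : ℝ) * (N.choose 2 : ℝ) * (S.card : ℝ) ^ s * ((2 * N : ℝ)) ^ (-(s : ℤ))
  by_contra! hbad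
  have hcount := card_nsmul_lt_card_nsmul_of_le_of_lt (s := blockAPIndex s N) (m := (#S : ℝ) ^ s)
    (n := bound) (fun g d => blockAP s N g ⊆ shiftedCopies S N d) (shiftBox_nonempty hN)
    (fun g hg => by exact_mod_cast pow_card_le_card_shifts_containing_blockAP hS hg)
    (fun d hd => by
      refine lt_of_le_of_lt ?_ (hbad d (Fintype.mem_piFinset.1 hd))
      exact_mod_cast card_le_fAP ((blockAP_injOn (by omega) hN).mono (filter_subset _ _))
        (fun g _ => ⟨_, _, by positivity, rfl⟩) (fun g hg => (mem_bipartiteBelow _).1 hg |>.2))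
  have hG : (N.choose 2 : ℝ) ≤ s * #(blockAPIndex s N) := by
    exact_mod_cast choose_two_le_mul_card_blockAPIndex (by omega)
  rw [nsmul_eq_mul, nsmul_eq_mul, card_shiftBox] at hcount
  have hbound : (((2 * N) ^ s : ℕ) : ℝ) * bound = N.choose 2 / s * (S.card : ℝ) ^ s := by
    simp only [bound, zpow_neg, zpow_natCast]
    push_cast
    field_simp
  rw [hbound] at hcount
  have hG' : (N.choose 2 : ℝ) / s ≤ #(blockAPIndex s N) := by
    rw [div_le_iff₀ (by positivity)]
    linarith
  exact hcount.not_ge (mul_le_mul_of_nonneg_right hG' (by positivity))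

theorem exists_good_shifts (k s : ℕ) (hs : 3 ≤ s) (hk : s < k) (N : ℕ) (hN : 0 < N)
    (S : Finset ℤ) (hS : S ⊆ Finset.Icc 1 (N : ℤ)) (hSfree : APFree k ↑S) :
    ∃ d : Fin s → ℤ, (∀ i, d i ∈ Finset.Icc (1 : ℤ) (2 * N)) ∧
      (1 / (s : ℝ)) * (N.choose 2 : ℝ) * (S.card : ℝ) ^ s * ((2 * N : ℝ)) ^ (-(s : ℤ)) ≤
        (fAP s (Finset.univ.biUnion (fun i : Fin s =>
          S.image (fun x => x + 6 * ((i : ℕ) : ℤ) * N - 1 + d i))) : ℝ) :=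
  exists_good_shifts_general s hs N hN S hS
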